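/- Under the positivity assumptions on S, the derivative of H at X = 0 is H'[0](ξ) = -A·ξ·Uᵀ, where U ∈ ℝ^{B×M'} is the matrix with entries U[b,m] = (S·M)[b,m] / (Σ_e S[b,e]), i.e. U = (S·M) ⊘ (S·1_{E×M'}). -/

import Mathlib

open Matrix

attribute [local instance] Matrix.normedAddCommGroup Matrix.normedSpace

/-- Entrywise exponential of a matrix. -/
noncomputable def mexp {m n : ℕ} (A : Matrix (Fin m) (Fin n) ℝ) : Matrix (Fin m) (Fin n) ℝ :=
  Matrix.of fun i j => Real.exp (A i j)

/-! Dividing by `F 0` normalises the columns of `Sᵀ`: with `W = Sᵀ · diag (1 / Σₑ S b e)`, whose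
columns sum to one, `H X` is the entrywise logarithm of `mexp (-(A X Mᵀ)) * W`. At `X = 0` the
entrywise exponential is taken at `0` and the logarithm at the all-ones matrix, where both have
derivative `1`, so the chain rule leaves only the linear part: `H'[0] ξ = -(A ξ Mᵀ) W`, and
`Mᵀ W = Uᵀ`. -/

theorem hasFDerivAt_matrix_map {m n : Type*} [Fintype m] [Fintype n] {f : ℝ → ℝ}
    {X : Matrix m n ℝ} (hf : ∀ i j, HasDerivAt f 1 (X i j)) :
    HasFDerivAt (fun Y : Matrix m n ℝ => Y.map f) (ContinuousLinearMap.id ℝ _) X := by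
  refine hasFDerivAt_pi'.2 fun i => hasFDerivAt_pi'.2 fun j => ?_
  have h := (hf i j).comp_hasFDerivAt X ((ContinuousLinearMap.proj j).comp
    ((ContinuousLinearMap.proj i).comp (ContinuousLinearMap.id ℝ (Matrix m n ℝ)))).hasFDerivAt
  exact h.congr_fderiv (one_smul ℝ _)

section
variable {m n k : ℕ}

theorem mexp_zero_mul_apply (W : Matrix (Fin n) (Fin k) ℝ) (i : Fin m) (j : Fin k) :
    (mexp (0 : Matrix (Fin m) (Fin n) ℝ) * W) i j = ∑ l, W l j := by
  simp [mexp, mul_apply]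

theorem hasFDerivAt_mexp_zero :
    HasFDerivAt (mexp (m := m) (n := n)) (ContinuousLinearMap.id ℝ _) 0 :=
  hasFDerivAt_matrix_map fun _ _ => by simpa using Real.hasDerivAt_exp 0

theorem hasFDerivAt_map_log_mexp_mul_zero {W : Matrix (Fin n) (Fin k) ℝ}
    (hW : ∀ j, ∑ l, W l j = 1) :
    HasFDerivAt (fun Y : Matrix (Fin m) (Fin n) ℝ => (mexp Y * W).map Real.log)
      (mulRightLinearMap (Fin m) ℝ W).toContinuousLinearMap 0 := by
  have hlog : HasFDerivAt (fun Z : Matrix (Fin m) (Fin k) ℝ => Z.map Real.log)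
      (ContinuousLinearMap.id ℝ _) (mexp (0 : Matrix (Fin m) (Fin n) ℝ) * W : Matrix _ _ ℝ) :=
    hasFDerivAt_matrix_map fun i j => by
      rw [mexp_zero_mul_apply, hW]
      simpa using Real.hasDerivAt_log one_ne_zero
  exact hlog.comp 0 ((mulRightLinearMap (Fin m) ℝ W).toContinuousLinearMap.hasFDerivAt.comp 0
    hasFDerivAt_mexp_zero)

end

theorem msct_H_fderiv_at_zero_general {Nx Ny E B M' : ℕ}
    (A : Matrix (Fin Ny) (Fin Nx) ℝ) (M : Matrix (Fin E) (Fin M') ℝ)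
    (S : Matrix (Fin B) (Fin E) ℝ)
    (hS_pos : ∀ b, 0 < ∑ e, S b e)
    (F : Matrix (Fin Nx) (Fin M') ℝ → Matrix (Fin Ny) (Fin B) ℝ)
    (hF : ∀ X, F X = mexp (-(A * X * Mᵀ)) * Sᵀ)
    (H : Matrix (Fin Nx) (Fin M') ℝ → Matrix (Fin Ny) (Fin B) ℝ)
    (hH : ∀ X i b, H X i b = Real.log (F X i b / F 0 i b))
    (U : Matrix (Fin B) (Fin M') ℝ)
    (hU : ∀ b m, U b m = (S * M) b m / ∑ e, S b e) :
    DifferentiableAt ℝ H 0 ∧ ∀ ξ, fderiv ℝ H 0 ξ = -(A * ξ * Uᵀ) := by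
  set W := Sᵀ * diagonal fun b => (∑ e, S b e)⁻¹
  have hW : ∀ b, ∑ e, W e b = 1 := fun b => by
    simp only [W, mul_diagonal, transpose_apply, ← Finset.sum_mul]
    exact mul_inv_cancel₀ (hS_pos b).ne'
  have hHW : H = fun X => (mexp (-(A * X * Mᵀ)) * W).map Real.log := by
    ext X i b
    simp [hH, hF, W, ← Matrix.mul_assoc, mul_diagonal, mexp_zero_mul_apply, div_eq_mul_inv]
  have hUW : Uᵀ = Mᵀ * W := by
    ext m b
    simp only [W, ← Matrix.mul_assoc, ← transpose_mul, mul_diagonal, transpose_apply, hU,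
      div_eq_mul_inv]
  let L :=
    (-(mulRightLinearMap (Fin Ny) ℝ Mᵀ ∘ₗ mulLeftLinearMap (Fin M') ℝ A)).toContinuousLinearMap
  have hD : HasFDerivAt H ((mulRightLinearMap (Fin Ny) ℝ W).toContinuousLinearMap.comp L) 0 := by
    rw [hHW]
    have hlog := hasFDerivAt_map_log_mexp_mul_zero (m := Ny) hW
    rw [← map_zero L] at hlog
    exact hlog.comp 0 L.hasFDerivAt
  refine ⟨hD.differentiableAt, fun ξ => ?_⟩
  rw [hD.fderiv, hUW]
  simp [L, Matrix.mul_assoc]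

/-- The derivative of the logarithmic forward map `H(X) = log(F(X) ⊘ F(0))`
at `X = 0` is `ξ ↦ -A·ξ·Uᵀ`, where `U[b,m] = (S·M)[b,m] / Σ_e S[b,e]`. -/
theorem msct_H_fderiv_at_zero {Nx Ny E B M' : ℕ}
    (A : Matrix (Fin Ny) (Fin Nx) ℝ) (M : Matrix (Fin E) (Fin M') ℝ)
    (S : Matrix (Fin B) (Fin E) ℝ)
    (hS_nonneg : ∀ b e, 0 ≤ S b e)
    (hS_pos : ∀ b, 0 < ∑ e, S b e)
    (F : Matrix (Fin Nx) (Fin M') ℝ → Matrix (Fin Ny) (Fin B) ℝ)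
    (hF : ∀ X, F X = mexp (-(A * X * Mᵀ)) * Sᵀ)
    (H : Matrix (Fin Nx) (Fin M') ℝ → Matrix (Fin Ny) (Fin B) ℝ)
    (hH : ∀ X i b, H X i b = Real.log (F X i b / F 0 i b))
    (U : Matrix (Fin B) (Fin M') ℝ)
    (hU : ∀ b m, U b m = (S * M) b m / ∑ e, S b e) :
    DifferentiableAt ℝ H 0 ∧ ∀ ξ, fderiv ℝ H 0 ξ = -(A * ξ * Uᵀ) :=
  msct_H_fderiv_at_zero_general A M S hS_pos F hF H hH U hU
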